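/- General oracle inequality for the lasso (Lemma A.3): Let S ⊆ {1,…,N} be a nonempty index set. Assume (i) the compatibility condition holds for (Σ, S) with constant φ² > 0, (ii) ‖Σ̂ − Σ‖_∞ ≤ φ²/(32·|S|), and (iii) max_{1≤j≤N} |Σ_{t=1}^T u_t X_{t,j}| ≤ Tλ/4. Then any lasso estimator β̂ satisfies ‖X(β̂ − β⁰)‖₂²/T + (λ/4)·‖β̂ − β⁰‖₁ ≤ (32/3)·λ²·|S|/φ² + (8/3)·λ·‖β⁰_{S^c}‖₁. -/

import Mathlib

/-!
Write `δ = β̂ - β⁰`, `V = ‖Xδ‖₂²/T`, `a = ‖δ_S‖₁`, `b = ‖δ_{Sᶜ}‖₁`. Comparing the lasso objective at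
`β̂` with its value at `β⁰ + (4/5) δ` and bounding the noise term by (iii) gives the basic
inequality `(9/5) V + (3/2) λ b ≤ (5/2) λ a + 4 λ ‖β⁰_{Sᶜ}‖₁`. If `b > 3a` this is already the
claim. Otherwise `δ` lies in the cone of the compatibility condition, which by (ii) passes from
`Σ` to `Σ̂` at the price of halving `φ²`; as `δᵀ Σ̂ δ = V` this gives `λ² a² ≤ 2 λ² |S| V / φ²`,
and AM-GM absorbs `λ a` into `V / 5` plus a multiple of `λ² |S| / φ²`.
-/

open Finset Matrix

section QuadraticForms

variable {ι : Type*} [Fintype ι]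

theorem sum_sum_mul_mul_eq_dotProduct_mulVec (A : Matrix ι ι ℝ) (z : ι → ℝ) :
    ∑ i, ∑ k, z i * A i k * z k = z ⬝ᵥ (A *ᵥ z) := by
  simp only [dotProduct, mulVec, mul_sum, mul_assoc]

theorem sum_sum_mul_gram_div_mul {m : Type*} [Fintype m] (X : Matrix m ι ℝ) (T : ℝ)
    (z : ι → ℝ) :
    ∑ i, ∑ k, z i * ((Xᵀ * X) i k / T) * z k = (∑ t, (X *ᵥ z) t ^ 2) / T := by
  have hgram : ∑ i, ∑ k, z i * (Xᵀ * X) i k * z k = ∑ t, (X *ᵥ z) t ^ 2 := by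
    rw [sum_sum_mul_mul_eq_dotProduct_mulVec, ← mulVec_mulVec, dotProduct_mulVec,
      vecMul_transpose]
    simp only [dotProduct, sq]
  rw [← hgram, sum_div]
  refine sum_congr rfl fun i _ => ?_
  rw [sum_div]
  exact sum_congr rfl fun k _ => by ring

theorem sum_sum_mul_mul_le_add_of_abs_sub_le {A B : Matrix ι ι ℝ} {ε : ℝ}
    (hAB : ∀ i k, |A i k - B i k| ≤ ε) (z : ι → ℝ) :
    ∑ i, ∑ k, z i * A i k * z k ≤ ∑ i, ∑ k, z i * B i k * z k + ε * (∑ j, |z j|) ^ 2 := by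
  have hterm : ∀ i k, z i * A i k * z k - z i * B i k * z k ≤ ε * (|z i| * |z k|) :=
    fun i k => calc
      z i * A i k * z k - z i * B i k * z k = z i * (A i k - B i k) * z k := by ring
      _ ≤ |z i * (A i k - B i k) * z k| := le_abs_self _
      _ = |A i k - B i k| * (|z i| * |z k|) := by rw [abs_mul, abs_mul]; ring
      _ ≤ ε * (|z i| * |z k|) := by gcongr; exact hAB i k
  have hsum := sum_le_sum fun i (_ : i ∈ univ) => sum_le_sum fun k (_ : k ∈ univ) => hterm i k
  simp only [sum_sub_distrib] at hsum
  rw [sq, sum_mul_sum, mul_sum]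
  simp only [mul_sum] at hsum ⊢
  linarith

end QuadraticForms

section Compatibility

variable {ι : Type*} [Fintype ι] [DecidableEq ι]

/-- The constant `c` is the paper's `φ²`. -/
def CompatibilityCondition (A : Matrix ι ι ℝ) (S : Finset ι) (c : ℝ) : Prop :=
  ∀ z : ι → ℝ, (∑ j ∈ Sᶜ, |z j|) ≤ 3 * ∑ j ∈ S, |z j| →
    (∑ j ∈ S, |z j|) ^ 2 ≤ (S.card : ℝ) * (∑ i, ∑ k, z i * A i k * z k) / c

theorem CompatibilityCondition.of_abs_sub_le {A B : Matrix ι ι ℝ} {S : Finset ι} {c : ℝ}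
    (hc : 0 < c) (hA : CompatibilityCondition A S c)
    (hAB : ∀ i k, |B i k - A i k| ≤ c / (32 * S.card)) :
    CompatibilityCondition B S (c / 2) := by
  intro z hcone
  set a := ∑ j ∈ S, |z j|
  set s : ℝ := (S.card : ℝ)
  have hsplit : ∑ j, |z j| = a + ∑ j ∈ Sᶜ, |z j| := (sum_add_sum_compl S _).symm
  have hnorm : (∑ j, |z j|) ^ 2 ≤ 16 * a ^ 2 := by
    have hb : 0 ≤ ∑ j ∈ Sᶜ, |z j| := sum_nonneg fun j _ => abs_nonneg _
    rw [hsplit]; nlinarith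
  have hscale : s * (c / (32 * s)) ≤ c / 32 :=
    calc s * (c / (32 * s)) = c / 32 * (s / s) := by ring
      _ ≤ c / 32 * 1 := by gcongr; exact div_self_le_one s
      _ = c / 32 := mul_one _
  have hQ := sum_sum_mul_mul_le_add_of_abs_sub_le (fun i k => by
    rw [abs_sub_comm]; exact hAB i k) z
  have hcompat := hA z hcone
  rw [le_div_iff₀ hc] at hcompat
  rw [le_div_iff₀ (half_pos hc)]
  have hs : 0 ≤ s := Nat.cast_nonneg _
  nlinarith [mul_le_mul_of_nonneg_left hQ hs,
    mul_le_mul_of_nonneg_right hscale (sq_nonneg (∑ j, |z j|)),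
    mul_le_mul_of_nonneg_left hnorm (by positivity : (0:ℝ) ≤ c / 32)]

end Compatibility

theorem sum_sub_mul_sq {ι : Type*} [Fintype ι] (u w : ι → ℝ) (c : ℝ) :
    ∑ i, (u i - c * w i) ^ 2 = ∑ i, u i ^ 2 - 2 * c * ∑ i, u i * w i + c ^ 2 * ∑ i, w i ^ 2 := by
  simp only [mul_sum, ← sum_sub_distrib, ← sum_add_distrib]
  exact sum_congr rfl fun i _ => by ring

theorem sum_abs_lineMap_le {ι : Type*} [Fintype ι] (β β' : ι → ℝ) {t : ℝ} (ht0 : 0 ≤ t)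
    (ht1 : t ≤ 1) :
    ∑ j, |β j + t * (β' j - β j)| ≤ (1 - t) * ∑ j, |β j| + t * ∑ j, |β' j| := by
  rw [mul_sum, mul_sum, ← sum_add_distrib]
  refine sum_le_sum fun j _ => ?_
  calc |β j + t * (β' j - β j)| = |(1 - t) * β j + t * β' j| := by ring_nf
    _ ≤ |(1 - t) * β j| + |t * β' j| := abs_add_le _ _
    _ = (1 - t) * |β j| + t * |β' j| := by
      rw [abs_mul, abs_mul, abs_of_nonneg (sub_nonneg.2 ht1), abs_of_nonneg ht0]

theorem sum_abs_sub_sum_abs_le {ι : Type*} [Fintype ι] [DecidableEq ι] (S : Finset ι)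
    (β β0 : ι → ℝ) :
    ∑ j, |β0 j| - ∑ j, |β j| ≤
      ∑ j ∈ S, |β j - β0 j| - ∑ j ∈ Sᶜ, |β j - β0 j| + 2 * ∑ j ∈ Sᶜ, |β0 j| := by
  have hS : ∑ j ∈ S, (|β0 j| - |β j|) ≤ ∑ j ∈ S, |β j - β0 j| :=
    sum_le_sum fun j _ => by rw [abs_sub_comm]; exact abs_sub_abs_le_abs_sub _ _
  have hSc : ∑ j ∈ Sᶜ, (|β0 j| - |β j|) ≤ ∑ j ∈ Sᶜ, (2 * |β0 j| - |β j - β0 j|) :=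
    sum_le_sum fun j _ => by linarith [abs_sub (β j) (β0 j)]
  rw [← sum_add_sum_compl S, ← sum_add_sum_compl S (fun j => |β j|)]
  simp only [sum_sub_distrib, ← mul_sum] at hS hSc
  linarith

theorem sum_mul_mulVec_le {m n : Type*} [Fintype m] [Fintype n] (X : Matrix m n ℝ)
    (u : m → ℝ) (δ : n → ℝ) {c : ℝ} (hc : ∀ j, |∑ t, u t * X t j| ≤ c) :
    ∑ t, u t * (X *ᵥ δ) t ≤ c * ∑ j, |δ j| :=
  calc ∑ t, u t * (X *ᵥ δ) t = ∑ j, (∑ t, u t * X t j) * δ j := dotProduct_mulVec u X δ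
    _ ≤ ∑ j, |(∑ t, u t * X t j) * δ j| := sum_le_sum fun j _ => le_abs_self _
    _ ≤ ∑ j, c * |δ j| := sum_le_sum fun j _ => by
      rw [abs_mul]; gcongr; exact hc j
    _ = c * ∑ j, |δ j| := (mul_sum _ _ _).symm

noncomputable def lassoObjective {T n : ℕ} (X : Matrix (Fin T) (Fin n) ℝ) (y : Fin T → ℝ) (lam : ℝ)
    (β : Fin n → ℝ) : ℝ :=
  (∑ t, (y t - X.mulVec β t) ^ 2) / (T : ℝ) + 2 * lam * ∑ j, |β j|

/-- Minimality of `β̂` against `β⁰ + t (β̂ - β⁰)`, divided by `1 - t`; by convexity of `‖·‖₁` this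
improves the factor of the prediction error from `1` (at `t = 0`) to `1 + t`. -/
theorem lasso_basic_inequality {T n : ℕ} (X : Matrix (Fin T) (Fin n) ℝ) (β0 βhat : Fin n → ℝ)
    (u y : Fin T → ℝ) (hy : y = X *ᵥ β0 + u) {lam t : ℝ} (hlam : 0 ≤ lam) (ht0 : 0 ≤ t)
    (ht1 : t < 1) (hmin : ∀ β, lassoObjective X y lam βhat ≤ lassoObjective X y lam β) :
    (1 + t) * ((∑ i, (X *ᵥ (βhat - β0)) i ^ 2) / T) ≤
      2 * ((∑ i, u i * (X *ᵥ (βhat - β0)) i) / T)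
        + 2 * lam * (∑ j, |β0 j| - ∑ j, |βhat j|) := by
  set w := X *ᵥ (βhat - β0)
  have hres : ∀ s : ℝ, ∀ i, y i - (X *ᵥ (β0 + s • (βhat - β0))) i = u i - s * w i := by
    intro s i
    simp only [hy, mulVec_add, mulVec_smul, Pi.add_apply, Pi.smul_apply, smul_eq_mul, w]
    ring
  have hl1 : ∑ j, |(β0 + t • (βhat - β0)) j| ≤ (1 - t) * ∑ j, |β0 j| + t * ∑ j, |βhat j| :=
    sum_abs_lineMap_le β0 βhat ht0 ht1.le
  have hcmp := hmin (β0 + t • (βhat - β0))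
  unfold lassoObjective at hcmp
  have hres1 : ∀ i, y i - (X *ᵥ βhat) i = u i - 1 * w i := by
    simpa using hres 1
  have hdiv : ∀ s : ℝ, (∑ i, u i ^ 2 - 2 * s * ∑ i, u i * w i + s ^ 2 * ∑ i, w i ^ 2) / T
      = (∑ i, u i ^ 2) / T - 2 * s * ((∑ i, u i * w i) / T) + s ^ 2 * ((∑ i, w i ^ 2) / T) := by
    intro s; ring
  simp only [hres1, hres t, sum_sub_mul_sq, hdiv] at hcmp
  have hpos : 0 < 1 - t := sub_pos.2 ht1
  refine le_of_mul_le_mul_left ?_ hpos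
  nlinarith [mul_le_mul_of_nonneg_left hl1 (by positivity : (0:ℝ) ≤ 2 * lam)]

theorem le_add_of_sq_le_four_mul {x p q : ℝ} (hp : 0 ≤ p) (hq : 0 ≤ q) (h : x ^ 2 ≤ 4 * p * q) :
    x ≤ p + q :=
  (le_abs_self x).trans <| abs_le_of_sq_le_sq (by nlinarith [sq_nonneg (p - q)]) (add_nonneg hp hq)

theorem oracle_bound_of_basic_inequality {lam c s V a b B : ℝ} (hlam : 0 ≤ lam) (hc : 0 < c)
    (hs : 0 ≤ s) (hV : 0 ≤ V) (hb : 0 ≤ b)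
    (hbasic : 9 / 5 * V + 3 / 2 * lam * b ≤ 5 / 2 * lam * a + 4 * lam * B)
    (hcone : b ≤ 3 * a → a ^ 2 ≤ s * V / (c / 2)) :
    V + lam / 4 * (a + b) ≤ 32 / 3 * lam ^ 2 * s / c + 8 / 3 * lam * B := by
  have hK : 0 ≤ 32 / 3 * lam ^ 2 * s / c := by positivity
  rcases le_or_gt b (3 * a) with hin | hout
  · have hW : 0 ≤ lam ^ 2 * s * V / c := by positivity
    have hsq : (23 / 12 * (lam * a)) ^ 2 ≤ 4 * (V / 5) * (32 / 3 * lam ^ 2 * s / c) :=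
      calc (23 / 12 * (lam * a)) ^ 2 = (23 / 12) ^ 2 * lam ^ 2 * a ^ 2 := by ring
        _ ≤ (23 / 12) ^ 2 * lam ^ 2 * (s * V / (c / 2)) := by gcongr; exact hcone hin
        _ = 529 / 72 * (lam ^ 2 * s * V / c) := by field_simp; ring
        _ ≤ 128 / 15 * (lam ^ 2 * s * V / c) := mul_le_mul_of_nonneg_right (by norm_num) hW
        _ = 4 * (V / 5) * (32 / 3 * lam ^ 2 * s / c) := by ring
    have hamgm := le_add_of_sq_le_four_mul (by positivity) hK hsq
    linarith [mul_nonneg hlam hb]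
  · linarith [mul_nonneg hlam hb, mul_le_mul_of_nonneg_left hout.le hlam]

theorem lasso_general_oracle_general
    {T N : ℕ}
    (X : Matrix (Fin T) (Fin N) ℝ) (β0 βhat : Fin N → ℝ) (u y : Fin T → ℝ)
    (hy : y = X.mulVec β0 + u)
    (Sig : Matrix (Fin N) (Fin N) ℝ)
    (lam φ : ℝ) (hlam : 0 < lam) (hφ : 0 < φ)
    (S : Finset (Fin N))
    -- (i) compatibility condition for (Σ, S) with constant φ² > 0
    (hcompat : ∀ z : Fin N → ℝ,
      (∑ j ∈ Sᶜ, |z j|) ≤ 3 * ∑ j ∈ S, |z j| →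
      (∑ j ∈ S, |z j|) ^ 2 ≤
        (S.card : ℝ) * (∑ i, ∑ k, z i * Sig i k * z k) / φ ^ 2)
    -- (ii) covariance closeness ‖Σ̂ − Σ‖_∞ ≤ φ²/(32|S|)
    (hclose : ∀ i k, |(X.transpose * X) i k / (T : ℝ) - Sig i k| ≤
      φ ^ 2 / (32 * (S.card : ℝ)))
    -- (iii) empirical process bound
    (hemp : ∀ j, |∑ t, u t * X t j| ≤ (T : ℝ) * lam / 4)
    -- βhat is a lasso estimator
    (hmin : ∀ β : Fin N → ℝ,
      (∑ t, (y t - X.mulVec βhat t) ^ 2) / (T : ℝ) + 2 * lam * ∑ j, |βhat j|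
        ≤ (∑ t, (y t - X.mulVec β t) ^ 2) / (T : ℝ) + 2 * lam * ∑ j, |β j|) :
    (∑ t, (X.mulVec (βhat - β0) t) ^ 2) / (T : ℝ)
        + (lam / 4) * ∑ j, |βhat j - β0 j|
      ≤ (32 / 3) * lam ^ 2 * (S.card : ℝ) / φ ^ 2
        + (8 / 3) * lam * ∑ j ∈ Sᶜ, |β0 j| := by
  have hsplit : ∑ j, |βhat j - β0 j| = ∑ j ∈ S, |βhat j - β0 j| + ∑ j ∈ Sᶜ, |βhat j - β0 j| :=
    (sum_add_sum_compl S _).symm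
  -- `t = 4/5` leaves the slack `V / 5` that absorbs the AM-GM step in the cone case.
  have hbasic := lasso_basic_inequality X β0 βhat u y hy (t := 4 / 5) hlam.le (by norm_num)
    (by norm_num) hmin
  have hnoise : (∑ t, u t * (X *ᵥ (βhat - β0)) t) / T ≤ lam / 4 * ∑ j, |βhat j - β0 j| :=
    div_le_of_le_mul₀ (Nat.cast_nonneg T) (by positivity) <|
      calc ∑ t, u t * (X *ᵥ (βhat - β0)) t ≤ T * lam / 4 * ∑ j, |βhat j - β0 j| :=
            sum_mul_mulVec_le X u _ hemp
        _ = _ := by ring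
  have hl1 := sum_abs_sub_sum_abs_le S βhat β0
  rw [hsplit]
  refine oracle_bound_of_basic_inequality hlam.le (pow_pos hφ 2) (Nat.cast_nonneg _)
    (by positivity) (sum_nonneg fun j _ => abs_nonneg _)
    (by nlinarith [mul_le_mul_of_nonneg_left hl1 hlam.le]) fun hcone => ?_
  have hcompat_gram := CompatibilityCondition.of_abs_sub_le
    (B := Matrix.of fun i k => (Xᵀ * X) i k / T) (pow_pos hφ 2) hcompat hclose (βhat - β0) hcone
  simp only [of_apply, sum_sum_mul_gram_div_mul] at hcompat_gram
  exact hcompat_gram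

/-- **General oracle inequality for the lasso (Lemma A.3).**
`X` is the `T × N` design matrix, `y = X β⁰ + u`, `Σ̂ = XᵀX/T`, `Sig` the population
covariance matrix, `S` a nonempty index set, and `βhat` any lasso estimator. -/
theorem lasso_general_oracle
    {T N : ℕ} (hT : 0 < T)
    (X : Matrix (Fin T) (Fin N) ℝ) (β0 βhat : Fin N → ℝ) (u y : Fin T → ℝ)
    (hy : y = X.mulVec β0 + u)
    (Sig : Matrix (Fin N) (Fin N) ℝ) (hSigSymm : Sig.IsSymm)
    (lam φ : ℝ) (hlam : 0 < lam) (hφ : 0 < φ)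
    (S : Finset (Fin N)) (hSne : S.Nonempty)
    -- (i) compatibility condition for (Σ, S) with constant φ² > 0
    (hcompat : ∀ z : Fin N → ℝ,
      (∑ j ∈ Sᶜ, |z j|) ≤ 3 * ∑ j ∈ S, |z j| →
      (∑ j ∈ S, |z j|) ^ 2 ≤
        (S.card : ℝ) * (∑ i, ∑ k, z i * Sig i k * z k) / φ ^ 2)
    -- (ii) covariance closeness ‖Σ̂ − Σ‖_∞ ≤ φ²/(32|S|)
    (hclose : ∀ i k, |(X.transpose * X) i k / (T : ℝ) - Sig i k| ≤
      φ ^ 2 / (32 * (S.card : ℝ)))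
    -- (iii) empirical process bound
    (hemp : ∀ j, |∑ t, u t * X t j| ≤ (T : ℝ) * lam / 4)
    -- βhat is a lasso estimator
    (hmin : ∀ β : Fin N → ℝ,
      (∑ t, (y t - X.mulVec βhat t) ^ 2) / (T : ℝ) + 2 * lam * ∑ j, |βhat j|
        ≤ (∑ t, (y t - X.mulVec β t) ^ 2) / (T : ℝ) + 2 * lam * ∑ j, |β j|) :
    (∑ t, (X.mulVec (βhat - β0) t) ^ 2) / (T : ℝ)
        + (lam / 4) * ∑ j, |βhat j - β0 j|
      ≤ (32 / 3) * lam ^ 2 * (S.card : ℝ) / φ ^ 2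
        + (8 / 3) * lam * ∑ j ∈ Sᶜ, |β0 j| :=
  lasso_general_oracle_general X β0 βhat u y hy Sig lam φ hlam hφ S hcompat hclose hemp hmin
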